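/- Let H be a coFrobenius Hopf algebra with integral φ and Nakayama automorphism N defined by φ(xy) = φ(y N(x)). Then N is comultiplicative (a coalgebra morphism) if and only if the modular function α = ε∘N equals the counit ε, which holds if and only if N = S⁻². -/

import Mathlib

/-! Everything is expressed through the hit action `g ⇀ x = Σ g(x₁) x₂` of a functional `g`:
since `ε (g ⇀ x) = g x`, the identity `g ⇀ x = x` for all `x` forces `g = ε`.
The formula for `N` reads `N x = S⁻²(α ⇀ x)`, so `α = ε` iff `N = S⁻²`, as `S⁻²` is injective.
If `N` is comultiplicative, applying `ε ⊗ id` to `Δ(N x) = (N ⊗ N)(Δ x)` gives `N x = N(α ⇀ x)`,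
hence `α = ε` by injectivity of `N`; conversely `α = ε` turns `Δ(N x) = (N ⊗ S⁻²)(Δ x)` into
comultiplicativity. -/

open TensorProduct Coalgebra HopfAlgebra

variable {H : Type*} [Ring H] [HopfAlgebra ℂ H]

/-- `φ` is a right integral: `Σ φ(x₁) x₂ = φ(x) 1`. -/
def IsRightIntegral (φ : H →ₗ[ℂ] ℂ) : Prop :=
  ∀ x : H,
    TensorProduct.lid ℂ H ((LinearMap.rTensor H φ) (Coalgebra.comul (R := ℂ) x)) = φ x • 1

theorem TensorProduct.lid_rTensor_map {R M N P Q : Type*} [CommSemiring R]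
    [AddCommMonoid M] [AddCommMonoid N] [AddCommMonoid P] [AddCommMonoid Q]
    [Module R M] [Module R N] [Module R P] [Module R Q]
    (h : N →ₗ[R] R) (f : M →ₗ[R] N) (g : P →ₗ[R] Q) (t : M ⊗[R] P) :
    TensorProduct.lid R Q (LinearMap.rTensor Q h (map f g t)) =
      g (TensorProduct.lid R P (LinearMap.rTensor P (h ∘ₗ f) t)) := by
  induction t using TensorProduct.induction_on with
  | zero => simp
  | tmul m p => simp
  | add t u ht hu => simp only [map_add, ht, hu]

section

variable {R C : Type*} [CommSemiring R] [AddCommMonoid C] [Module R C] [Coalgebra R C]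

theorem Coalgebra.counit_lid_rTensor_comul (g : C →ₗ[R] R) (x : C) :
    counit (_root_.TensorProduct.lid R C (LinearMap.rTensor C g (comul x))) = g x := by
  have h : ∀ t : C ⊗[R] C, counit (_root_.TensorProduct.lid R C (LinearMap.rTensor C g t)) =
      g (_root_.TensorProduct.rid R C (LinearMap.lTensor C counit t)) := fun t => by
    induction t using TensorProduct.induction_on with
    | zero => simp
    | tmul a b => simp [mul_comm]
    | add t u ht hu => simp only [map_add, ht, hu]
  rw [h, lTensor_counit_comul, _root_.TensorProduct.rid_tmul, one_smul]

theorem Coalgebra.eq_counit_of_lid_rTensor_comul (g : C →ₗ[R] R)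
    (hg : ∀ x, _root_.TensorProduct.lid R C (LinearMap.rTensor C g (comul x)) = x) :
    g = counit :=
  LinearMap.ext fun x => by rw [← counit_lid_rTensor_comul g x, hg]

end

theorem nakayama_comultiplicative_iff_general
    (S' : H →ₗ[ℂ] H)
    (hS'r : ∀ x : H, antipode (R := ℂ) (S' x) = x)
    (N : H →ₗ[ℂ] H) (hNbij : Function.Bijective N)
    (hNformula : ∀ x : H, N x =
      TensorProduct.lid ℂ H
        ((LinearMap.rTensor H ((Coalgebra.counit (R := ℂ)) ∘ₗ N))
          ((LinearMap.lTensor H (S' ∘ₗ S')) (Coalgebra.comul (R := ℂ) x))))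
    (hΔN : ∀ x : H, Coalgebra.comul (R := ℂ) (N x) =
      (TensorProduct.map N (S' ∘ₗ S')) (Coalgebra.comul (R := ℂ) x)) :
    ((∀ x : H, Coalgebra.comul (R := ℂ) (N x) =
        (TensorProduct.map N N) (Coalgebra.comul (R := ℂ) x)) ↔
      ((Coalgebra.counit (R := ℂ)) ∘ₗ N = Coalgebra.counit (R := ℂ)) ) ∧
    (((Coalgebra.counit (R := ℂ)) ∘ₗ N = Coalgebra.counit (R := ℂ)) ↔
      (∀ x : H, N x = S' (S' x))) := by
  have hS'S'_inj : Function.Injective (S' ∘ₗ S') :=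
    (Function.LeftInverse.injective hS'r).comp (Function.LeftInverse.injective hS'r)
  have hN_eq_hit : ∀ x,
      N x = (S' ∘ₗ S') (TensorProduct.lid ℂ H (LinearMap.rTensor H (counit ∘ₗ N) (comul x))) :=
    fun x => by
      rw [hNformula x]
      exact lid_rTensor_map _ LinearMap.id _ _
  have hα_of_N : (∀ x, N x = S' (S' x)) → counit ∘ₗ N = counit := fun hN =>
    eq_counit_of_lid_rTensor_comul _ fun x => hS'S'_inj (by rw [← hN_eq_hit, hN]; rfl)
  have hN_of_α : counit ∘ₗ N = counit → ∀ x, N x = S' (S' x) := fun hα x => by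
    rw [hN_eq_hit, hα, rTensor_counit_comul, lid_tmul, one_smul]; rfl
  have hα_of_comul : (∀ x, comul (N x) = map N N (comul x)) → counit ∘ₗ N = counit :=
    fun hΔ => eq_counit_of_lid_rTensor_comul _ fun x => hNbij.injective <| by
      have h := congrArg (fun t => TensorProduct.lid ℂ H (LinearMap.rTensor H counit t)) (hΔ x)
      simp only [rTensor_counit_comul, lid_tmul, one_smul, lid_rTensor_map] at h
      exact h.symm
  refine ⟨⟨hα_of_comul, fun hα x => ?_⟩, hN_of_α, hα_of_N⟩
  rw [hΔN x, show S' ∘ₗ S' = N from LinearMap.ext fun a => (hN_of_α hα a).symm]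

/-- for a coFrobenius Hopf algebra with Nakayama automorphism `N`
(`φ(xy) = φ(y N(x))`), `N` is comultiplicative iff the modular function `α = ε∘N`
equals the counit, iff `N = S⁻²`. -/
theorem nakayama_comultiplicative_iff
    (φ : H →ₗ[ℂ] ℂ) (hr : IsRightIntegral φ) (hφ : φ ≠ 0)
    (S' : H →ₗ[ℂ] H)
    (hS'l : ∀ x : H, S' (antipode (R := ℂ) x) = x)
    (hS'r : ∀ x : H, antipode (R := ℂ) (S' x) = x)
    (N : H →ₗ[ℂ] H) (hNbij : Function.Bijective N)
    (hNmul : ∀ x y : H, N (x * y) = N x * N y) (hNone : N 1 = 1)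
    (hNak : ∀ x y : H, φ (x * y) = φ (y * N x))
    (hNformula : ∀ x : H, N x =
      TensorProduct.lid ℂ H
        ((LinearMap.rTensor H ((Coalgebra.counit (R := ℂ)) ∘ₗ N))
          ((LinearMap.lTensor H (S' ∘ₗ S')) (Coalgebra.comul (R := ℂ) x))))
    (hΔN : ∀ x : H, Coalgebra.comul (R := ℂ) (N x) =
      (TensorProduct.map N (S' ∘ₗ S')) (Coalgebra.comul (R := ℂ) x)) :
    ((∀ x : H, Coalgebra.comul (R := ℂ) (N x) =
        (TensorProduct.map N N) (Coalgebra.comul (R := ℂ) x)) ↔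
      ((Coalgebra.counit (R := ℂ)) ∘ₗ N = Coalgebra.counit (R := ℂ)) ) ∧
    (((Coalgebra.counit (R := ℂ)) ∘ₗ N = Coalgebra.counit (R := ℂ)) ↔
      (∀ x : H, N x = S' (S' x))) :=
  nakayama_comultiplicative_iff_general S' hS'r N hNbij hNformula hΔN
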